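/- arXiv:2407.01379 — 5 statements merged into one kernel-verified Lean document; each statement's English description precedes it below -/
import Mathlib

section
/- Let V₁, V₂, V₃ be finite-dimensional vector spaces over a field K with V₂ ≠ 0, and let W be the Lie algebra of strictly block upper triangular endomorphisms of V₁ × V₂ × V₃ with projection π. Then a Lie subalgebra u of W satisfies u = W if and only if π(u) = Hom_K(V₂,V₁) × Hom_K(V₃,V₂). (This is the Lie-algebraic core of the paper's Proposition 2.14: u(M) is maximal iff u₋₁(M) is maximal.) -/
/- Setup: `W` is the Lie algebra of strictly block upper triangular endomorphisms of
`V₁ × V₂ × V₃` (under the commutator bracket `f * g - g * f`), and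
`π : W → Hom(V₂,V₁) × Hom(V₃,V₂)` sends `f` to its blocks `(f₁₂, f₂₃)`. -/

variable (K : Type*) [Field K]
variable (V₁ V₂ V₃ : Type*)
  [AddCommGroup V₁] [Module K V₁]
  [AddCommGroup V₂] [Module K V₂]
  [AddCommGroup V₃] [Module K V₃]

/-- The `(1,2)` block `f₁₂ : V₂ → V₁` of an endomorphism of `V₁ × V₂ × V₃`. -/
def block12 (f : Module.End K (V₁ × V₂ × V₃)) : V₂ →ₗ[K] V₁ :=
  (LinearMap.fst K V₁ (V₂ × V₃)) ∘ₗ f ∘ₗ (LinearMap.inr K V₁ (V₂ × V₃)) ∘ₗ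
    (LinearMap.inl K V₂ V₃)

/-- The `(2,3)` block `f₂₃ : V₃ → V₂` of an endomorphism of `V₁ × V₂ × V₃`. -/
def block23 (f : Module.End K (V₁ × V₂ × V₃)) : V₃ →ₗ[K] V₂ :=
  (LinearMap.fst K V₂ V₃) ∘ₗ (LinearMap.snd K V₁ (V₂ × V₃)) ∘ₗ f ∘ₗ
    (LinearMap.inr K V₁ (V₂ × V₃)) ∘ₗ (LinearMap.inr K V₂ V₃)

/-- Membership in `W`: `f(V₁) = 0`, `f(V₂) ⊆ V₁`, `f(V₃) ⊆ V₁ × V₂`. -/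
def memW (f : Module.End K (V₁ × V₂ × V₃)) : Prop :=
  (∀ x₁ : V₁, f (x₁, 0, 0) = 0) ∧
  (∀ x₂ : V₂, (f (0, x₂, 0)).2 = 0) ∧
  (∀ x₃ : V₃, (f (0, 0, x₃)).2.2 = 0)

/-- The projection `π : W → Hom(V₂,V₁) × Hom(V₃,V₂)`, `f ↦ (f₁₂, f₂₃)`. -/
def piW (f : Module.End K (V₁ × V₂ × V₃)) : (V₂ →ₗ[K] V₁) × (V₃ →ₗ[K] V₂) :=
  (block12 K V₁ V₂ V₃ f, block23 K V₁ V₂ V₃ f)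

def block13 (f : Module.End K (V₁ × V₂ × V₃)) : V₃ →ₗ[K] V₁ :=
  (LinearMap.fst K V₁ (V₂ × V₃)) ∘ₗ f ∘ₗ (LinearMap.inr K V₁ (V₂ × V₃)) ∘ₗ
    (LinearMap.inr K V₂ V₃)

def mkW (a : V₂ →ₗ[K] V₁) (b : V₃ →ₗ[K] V₂) (c : V₃ →ₗ[K] V₁) :
    Module.End K (V₁ × V₂ × V₃) :=
  LinearMap.prod
    (a ∘ₗ (LinearMap.fst K V₂ V₃) ∘ₗ (LinearMap.snd K V₁ (V₂ × V₃)) +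
     c ∘ₗ (LinearMap.snd K V₂ V₃) ∘ₗ (LinearMap.snd K V₁ (V₂ × V₃)))
    (LinearMap.prod (b ∘ₗ (LinearMap.snd K V₂ V₃) ∘ₗ (LinearMap.snd K V₁ (V₂ × V₃))) 0)

theorem mkW_apply (a : V₂ →ₗ[K] V₁) (b : V₃ →ₗ[K] V₂) (c : V₃ →ₗ[K] V₁) (x : V₁ × V₂ × V₃) :
    mkW K V₁ V₂ V₃ a b c x = (a x.2.1 + c x.2.2, b x.2.2, (0:V₃)) := rfl

theorem memW_mkW (a : V₂ →ₗ[K] V₁) (b : V₃ →ₗ[K] V₂) (c : V₃ →ₗ[K] V₁) :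
    memW K V₁ V₂ V₃ (mkW K V₁ V₂ V₃ a b c) := by
  refine ⟨fun x₁ => ?_, fun x₂ => ?_, fun x₃ => ?_⟩ <;> simp [mkW_apply, Prod.ext_iff]

theorem block12_mkW (a : V₂ →ₗ[K] V₁) (b : V₃ →ₗ[K] V₂) (c : V₃ →ₗ[K] V₁) :
    block12 K V₁ V₂ V₃ (mkW K V₁ V₂ V₃ a b c) = a := by
  ext x; simp [block12, mkW_apply]

theorem block23_mkW (a : V₂ →ₗ[K] V₁) (b : V₃ →ₗ[K] V₂) (c : V₃ →ₗ[K] V₁) :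
    block23 K V₁ V₂ V₃ (mkW K V₁ V₂ V₃ a b c) = b := by
  ext x; simp [block23, mkW_apply]

theorem block13_mkW (a : V₂ →ₗ[K] V₁) (b : V₃ →ₗ[K] V₂) (c : V₃ →ₗ[K] V₁) :
    block13 K V₁ V₂ V₃ (mkW K V₁ V₂ V₃ a b c) = c := by
  ext x; simp [block13, mkW_apply]

theorem eq_mkW {f : Module.End K (V₁ × V₂ × V₃)} (hf : memW K V₁ V₂ V₃ f) :
    f = mkW K V₁ V₂ V₃ (block12 K V₁ V₂ V₃ f) (block23 K V₁ V₂ V₃ f)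
        (block13 K V₁ V₂ V₃ f) := by
  obtain ⟨h1, h2, h3⟩ := hf
  apply LinearMap.ext
  rintro ⟨x₁, x₂, x₃⟩
  have hx : (x₁, x₂, x₃) = (x₁, 0, 0) + (0, x₂, 0) + ((0:V₁), (0:V₂), x₃) := by
    simp [Prod.ext_iff]
  rw [hx, map_add, map_add, h1]
  have h2' : f (0, x₂, 0) = ((f (0, x₂, 0)).1, 0, 0) := by
    have := h2 x₂; ext <;> simp_all [Prod.ext_iff]
  have h3' : f (0, 0, x₃) = ((f (0, 0, x₃)).1, (f (0, 0, x₃)).2.1, 0) := by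
    have := h3 x₃; ext <;> simp_all [Prod.ext_iff]
  rw [h2', h3']
  simp [mkW_apply, block12, block23, block13, Prod.ext_iff]

theorem mul_mem_corner {f g : Module.End K (V₁ × V₂ × V₃)}
    (hf : memW K V₁ V₂ V₃ f) (hg : memW K V₁ V₂ V₃ g) :
    f * g = mkW K V₁ V₂ V₃ 0 0 ((block12 K V₁ V₂ V₃ f) ∘ₗ (block23 K V₁ V₂ V₃ g)) := by
  conv_lhs => rw [eq_mkW K V₁ V₂ V₃ hf, eq_mkW K V₁ V₂ V₃ hg]
  apply LinearMap.ext
  rintro ⟨x₁, x₂, x₃⟩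
  simp [Module.End.mul_apply, mkW_apply, Prod.ext_iff]

def cornerMap : (V₃ →ₗ[K] V₁) →ₗ[K] Module.End K (V₁ × V₂ × V₃) where
  toFun c := mkW K V₁ V₂ V₃ 0 0 c
  map_add' c c' := by apply LinearMap.ext; intro x; simp [mkW_apply, Prod.ext_iff]
  map_smul' t c := by apply LinearMap.ext; intro x; simp [mkW_apply, Prod.ext_iff]

theorem mkW_split (a : V₂ →ₗ[K] V₁) (b : V₃ →ₗ[K] V₂) (c c' : V₃ →ₗ[K] V₁) :
    mkW K V₁ V₂ V₃ a b c = mkW K V₁ V₂ V₃ a b c' + mkW K V₁ V₂ V₃ 0 0 (c - c') := by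
  apply LinearMap.ext; intro x; simp only [LinearMap.add_apply, mkW_apply, Prod.ext_iff, LinearMap.sub_apply,
    LinearMap.zero_apply, Prod.mk_add_mk]
  refine ⟨by abel, by simp, by simp⟩

theorem rankOne_factor {v : V₂} (φ : Module.Dual K V₂) (hφ : φ v = 1)
    (ψ : Module.Dual K V₃) (w : V₁) :
    ψ.smulRight w = (φ.smulRight w) ∘ₗ (ψ.smulRight v) := by
  apply LinearMap.ext; intro x
  simp [LinearMap.smulRight_apply, smul_smul, hφ]

theorem sum_rankOne [FiniteDimensional K V₃] (c : V₃ →ₗ[K] V₁) :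
    c = ∑ i : Module.Basis.ofVectorSpaceIndex K V₃,
        ((Module.Basis.ofVectorSpace K V₃).coord i).smulRight (c (Module.Basis.ofVectorSpace K V₃ i)) := by
  set B := Module.Basis.ofVectorSpace K V₃
  apply LinearMap.ext; intro x
  simp only [LinearMap.coe_sum, Finset.sum_apply, LinearMap.smulRight_apply, Module.Basis.coord_apply]
  conv_lhs => rw [← B.sum_repr x]
  simp only [map_sum, map_smul]

/-- A Lie subalgebra `u` of `W` equals `W` iff `π(u) = Hom(V₂,V₁) × Hom(V₃,V₂)`. -/
theorem stmt0 [FiniteDimensional K V₁] [FiniteDimensional K V₂] [FiniteDimensional K V₃]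
    (hV₂ : Nontrivial V₂)
    (u : Submodule K (Module.End K (V₁ × V₂ × V₃)))
    (huW : ∀ f ∈ u, memW K V₁ V₂ V₃ f)
    (hu_bracket : ∀ f ∈ u, ∀ g ∈ u, f * g - g * f ∈ u) :
    (u : Set (Module.End K (V₁ × V₂ × V₃))) = {f | memW K V₁ V₂ V₃ f} ↔
      piW K V₁ V₂ V₃ '' (u : Set (Module.End K (V₁ × V₂ × V₃))) = Set.univ := by
  constructor
  · intro hu
    apply Set.eq_univ_iff_forall.mpr
    rintro ⟨a, b⟩
    refine ⟨mkW K V₁ V₂ V₃ a b 0, ?_, ?_⟩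
    · show mkW K V₁ V₂ V₃ a b 0 ∈ (u : Set _)
      rw [hu]; exact memW_mkW K V₁ V₂ V₃ a b 0
    · simp [piW, block12_mkW, block23_mkW]
  · intro hπ
    obtain ⟨v, hv⟩ := exists_ne (0 : V₂)
    have hdual : ∃ φ : Module.Dual K V₂, φ v = 1 := by
      have h := (Module.forall_dual_apply_eq_zero_iff K v).not.mpr hv
      push_neg at h
      obtain ⟨φ, hφ⟩ := h
      exact ⟨(φ v)⁻¹ • φ, by simp [inv_mul_cancel₀ hφ]⟩
    obtain ⟨φ, hφ⟩ := hdual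
    have hπ' : ∀ p : (V₂ →ₗ[K] V₁) × (V₃ →ₗ[K] V₂),
        ∃ f ∈ u, piW K V₁ V₂ V₃ f = p := by
      intro p
      have hp : p ∈ piW K V₁ V₂ V₃ '' (u : Set _) := by rw [hπ]; trivial
      obtain ⟨f, hf, hpf⟩ := hp
      exact ⟨f, hf, hpf⟩
    have hAB : ∀ (a : V₂ →ₗ[K] V₁) (b : V₃ →ₗ[K] V₂),
        mkW K V₁ V₂ V₃ 0 0 (a ∘ₗ b) ∈ u := by
      intro a b
      obtain ⟨f, hf, hpf⟩ := hπ' (a, 0)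
      obtain ⟨g, hg, hpg⟩ := hπ' (0, b)
      have hf12 : block12 K V₁ V₂ V₃ f = a := congrArg Prod.fst hpf
      have hf23 : block23 K V₁ V₂ V₃ f = 0 := congrArg Prod.snd hpf
      have hg12 : block12 K V₁ V₂ V₃ g = 0 := congrArg Prod.fst hpg
      have hg23 : block23 K V₁ V₂ V₃ g = b := congrArg Prod.snd hpg
      have hbr := hu_bracket f hf g hg
      rw [mul_mem_corner K V₁ V₂ V₃ (huW f hf) (huW g hg),
          mul_mem_corner K V₁ V₂ V₃ (huW g hg) (huW f hf),
          hf12, hg23, hg12, hf23] at hbr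
      have h0 : mkW K V₁ V₂ V₃ 0 0 ((0 : V₂ →ₗ[K] V₁) ∘ₗ (0 : V₃ →ₗ[K] V₂)) = 0 := by
        apply LinearMap.ext; intro x; simp [mkW_apply, Prod.ext_iff]
      rw [h0, sub_zero] at hbr
      exact hbr
    have hcorner : ∀ c : V₃ →ₗ[K] V₁, mkW K V₁ V₂ V₃ 0 0 c ∈ u := by
      intro c
      have hc : c ∈ u.comap (cornerMap K V₁ V₂ V₃) := by
        rw [sum_rankOne K V₁ V₃ c]
        apply Submodule.sum_mem
        intro i _
        have h := hAB (φ.smulRight (c (Module.Basis.ofVectorSpace K V₃ i)))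
          (((Module.Basis.ofVectorSpace K V₃).coord i).smulRight v)
        rw [← rankOne_factor K V₁ V₂ V₃ φ hφ _ _] at h
        exact h
      exact hc
    ext f
    simp only [SetLike.mem_coe, Set.mem_setOf_eq]
    constructor
    · exact huW f
    · intro hf
      obtain ⟨g, hg, hpg⟩ := hπ' (piW K V₁ V₂ V₃ f)
      have hg12 : block12 K V₁ V₂ V₃ g = block12 K V₁ V₂ V₃ f := congrArg Prod.fst hpg
      have hg23 : block23 K V₁ V₂ V₃ g = block23 K V₁ V₂ V₃ f := congrArg Prod.snd hpg
      have hgeq : g = mkW K V₁ V₂ V₃ (block12 K V₁ V₂ V₃ f) (block23 K V₁ V₂ V₃ f)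
          (block13 K V₁ V₂ V₃ g) := by
        conv_lhs => rw [eq_mkW K V₁ V₂ V₃ (huW g hg)]
        rw [hg12, hg23]
      have key := mkW_split K V₁ V₂ V₃ (block12 K V₁ V₂ V₃ f) (block23 K V₁ V₂ V₃ f)
        (block13 K V₁ V₂ V₃ f) (block13 K V₁ V₂ V₃ g)
      rw [← eq_mkW K V₁ V₂ V₃ hf, ← hgeq] at key
      rw [key]
      exact u.add_mem hg (hcorner _)
end

section
/- Let R be a ring, B a semisimple R-module, and A a submodule of B such that every R-linear map from B/A to A is zero. Then A has a unique complement in B: there exists exactly one submodule C of B with A ∩ C = 0 and A + C = B. -/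
/-- If `B` is a semisimple `R`-module and `A ⊆ B` is a submodule with no nonzero
`R`-linear maps `B/A → A`, then `A` has a unique complement in `B`. -/
theorem stmt5 (R : Type*) [Ring R] (B : Type*) [AddCommGroup B] [Module R B]
    [IsSemisimpleModule R B] (A : Submodule R B)
    (hhom : ∀ φ : (B ⧸ A) →ₗ[R] A, φ = 0) :
    ∃! C : Submodule R B, A ⊓ C = ⊥ ∧ A ⊔ C = ⊤ := by
  have key : ∀ D D' : Submodule R B, (A ⊓ D = ⊥ ∧ A ⊔ D = ⊤) →
      (A ⊓ D' = ⊥ ∧ A ⊔ D' = ⊤) → D ≤ D' := by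
    intro D D' hD hD'
    have hc : IsCompl A D := ⟨disjoint_iff.2 hD.1, codisjoint_iff.2 hD.2⟩
    have hc' : IsCompl A D' := ⟨disjoint_iff.2 hD'.1, codisjoint_iff.2 hD'.2⟩
    intro x hx
    set π := Submodule.linearProjOfIsCompl A D' hc' with hπ
    set e := Submodule.quotientEquivOfIsCompl A D hc with he
    have hφ := hhom ((π.comp D.subtype).comp e.toLinearMap)
    have hx0 : π x = 0 := by
      have h1 := congrArg (fun f => f (e.symm ⟨x, hx⟩)) hφ
      simpa using h1
    exact (Submodule.linearProjOfIsCompl_apply_eq_zero_iff hc').1 hx0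
  obtain ⟨C, hC⟩ := exists_isCompl A
  have hCp : A ⊓ C = ⊥ ∧ A ⊔ C = ⊤ := ⟨disjoint_iff.1 hC.disjoint, codisjoint_iff.1 hC.codisjoint⟩
  exact ⟨C, hCp, fun D hD => le_antisymm (key D C hD hCp) (key C D hCp hD)⟩
end

section
/- Let R be a ring, B a semisimple R-module, A a submodule of B, and let q : B → B/A be the quotient map. Let u and u′ be submodules of B such that u ∩ A = u′ ∩ A, q(u) = q(u′), and every R-linear map from the submodule q(u) of B/A to A is zero. Then u = u′. (This is the module-theoretic content of the paper's Proposition 2.6: under the stated Hom-vanishing condition, u(M) is uniquely determined inside W₋₁End(M) by u₋₂(M) and u₋₁(M).) -/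
private lemma stmt6_aux (R : Type*) [Ring R] (B : Type*) [AddCommGroup B] [Module R B]
    [IsSemisimpleModule R B] (A u u' : Submodule R B)
    (hinf : u ⊓ A = u' ⊓ A)
    (himg : u.map A.mkQ = u'.map A.mkQ)
    (hhom : ∀ φ : (u.map A.mkQ) →ₗ[R] A, φ = 0) :
    u ≤ u' := by
  -- relative complements of `u ⊓ A` in `u` and of `u' ⊓ A` in `u'`
  obtain ⟨C, hCle, hCinf, hCsup⟩ :=
    ((Set.Iic.complementedLattice_iff (a := u)).mp inferInstance) (u ⊓ A) inf_le_left
  obtain ⟨C', hC'le, hC'inf, hC'sup⟩ :=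
    ((Set.Iic.complementedLattice_iff (a := u')).mp inferInstance) (u' ⊓ A) inf_le_left
  have hbotmap : ∀ v : Submodule R B, (v ⊓ A).map A.mkQ = ⊥ := by
    intro v
    rw [eq_bot_iff]; rintro x ⟨y, hy, rfl⟩
    simp only [SetLike.mem_coe, Submodule.mem_inf] at hy
    simp [Submodule.Quotient.mk_eq_zero, hy.2]
  have hmapC : C.map A.mkQ = u.map A.mkQ := by
    have h := congrArg (Submodule.map A.mkQ) hCsup
    rwa [Submodule.map_sup, hbotmap, bot_sup_eq] at h
  have hmapC' : C'.map A.mkQ = u.map A.mkQ := by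
    have h := congrArg (Submodule.map A.mkQ) hC'sup
    rw [Submodule.map_sup, hbotmap, bot_sup_eq] at h
    rw [h, himg]
  -- bijection from a relative complement onto `q(u)`
  have key : ∀ (v D : Submodule R B), D ≤ v → (v ⊓ A) ⊓ D = ⊥ →
      D.map A.mkQ = u.map A.mkQ →
      ∃ f : D →ₗ[R] (u.map A.mkQ), Function.Bijective f ∧
        ∀ x : D, (f x : B ⧸ A) = A.mkQ x := by
    intro v D hDle hDinf hDmap
    refine ⟨(A.mkQ ∘ₗ D.subtype).codRestrict _ (fun x => hDmap ▸ ⟨x, x.2, rfl⟩), ⟨?_, ?_⟩,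
      fun x => rfl⟩
    · intro x y hxy
      have h1 : A.mkQ ((x : B) - y) = 0 := by
        have := congrArg Subtype.val hxy
        simpa [sub_eq_zero] using this
      have h2 : (x : B) - y ∈ A := (Submodule.Quotient.mk_eq_zero A).mp h1
      have h3 : (x : B) - y ∈ (v ⊓ A) ⊓ D :=
        ⟨⟨v.sub_mem (hDle x.2) (hDle y.2), h2⟩, D.sub_mem x.2 y.2⟩
      rw [hDinf] at h3
      exact Subtype.ext (sub_eq_zero.mp h3)
    · rintro ⟨z, hz⟩
      rw [← hDmap] at hz
      obtain ⟨y, hy, rfl⟩ := hz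
      exact ⟨⟨y, hy⟩, rfl⟩
  obtain ⟨f, hf, hfval⟩ := key u C hCle hCinf hmapC
  obtain ⟨f', hf', hf'val⟩ := key u' C' hC'le hC'inf hmapC'
  let e := LinearEquiv.ofBijective f hf
  let e' := LinearEquiv.ofBijective f' hf'
  -- the difference of the two sections lands in A
  set φ : (u.map A.mkQ) →ₗ[R] B :=
    C.subtype ∘ₗ e.symm.toLinearMap - C'.subtype ∘ₗ e'.symm.toLinearMap with hφ
  have hφA : ∀ x, φ x ∈ A := by
    intro x
    rw [← Submodule.Quotient.mk_eq_zero A]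
    have h1 : A.mkQ ((e.symm x : B)) = (x : B ⧸ A) := by
      rw [← hfval (e.symm x)]; exact congrArg Subtype.val (e.apply_symm_apply x)
    have h2 : A.mkQ ((e'.symm x : B)) = (x : B ⧸ A) := by
      rw [← hf'val (e'.symm x)]; exact congrArg Subtype.val (e'.apply_symm_apply x)
    have : A.mkQ (φ x) = A.mkQ ((e.symm x : B)) - A.mkQ ((e'.symm x : B)) := by
      simp [hφ, map_sub]
    rw [show ((Submodule.Quotient.mk (φ x)) : B ⧸ A) = A.mkQ (φ x) from rfl, this, h1, h2,
      sub_self]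
  have hφ0 : φ = 0 := by
    have := hhom (φ.codRestrict A hφA)
    ext x
    have := congrArg Subtype.val (LinearMap.congr_fun this x)
    simpa using this
  -- hence C ≤ C' ≤ u'
  have hCC' : C ≤ u' := by
    intro c hc
    have h0 := LinearMap.congr_fun hφ0 (f ⟨c, hc⟩)
    have he : e.symm (f ⟨c, hc⟩) = ⟨c, hc⟩ := e.symm_apply_apply ⟨c, hc⟩
    simp only [hφ, LinearMap.sub_apply, LinearMap.coe_comp, Function.comp_apply,
      LinearMap.zero_apply, sub_eq_zero] at h0
    have h0' : ((e.symm (f ⟨c, hc⟩) : C) : B) = ((e'.symm (f ⟨c, hc⟩) : C') : B) := h0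
    rw [he] at h0'
    have : c = ((e'.symm (f ⟨c, hc⟩) : C') : B) := h0'
    rw [this]
    exact hC'le (e'.symm (f ⟨c, hc⟩)).2
  rw [← hCsup]
  exact sup_le (by rw [hinf]; exact inf_le_left) hCC'

/-- Let `B` be a semisimple `R`-module, `A ⊆ B` a submodule, and `q : B → B/A` the
quotient map. If `u, u'` are submodules of `B` with `u ⊓ A = u' ⊓ A`, `q(u) = q(u')`,
and every `R`-linear map from the submodule `q(u)` of `B/A` to `A` is zero,
then `u = u'`. -/
theorem stmt6 (R : Type*) [Ring R] (B : Type*) [AddCommGroup B] [Module R B]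
    [IsSemisimpleModule R B] (A u u' : Submodule R B)
    (hinf : u ⊓ A = u' ⊓ A)
    (himg : u.map A.mkQ = u'.map A.mkQ)
    (hhom : ∀ φ : (u.map A.mkQ) →ₗ[R] A, φ = 0) :
    u = u' := by
  refine le_antisymm (stmt6_aux R B A u u' hinf himg hhom)
    (stmt6_aux R B A u' u hinf.symm himg.symm (himg ▸ hhom))
end

section
/- Let R be a ring and B a semisimple R-module with an internal direct sum decomposition B = A ⊕ C into submodules A and C (i.e., A ∩ C = 0 and A + C = B) such that every R-linear map from C to A is zero. Then every submodule u of B decomposes as u = (u ∩ A) ⊕ (u ∩ C); equivalently, for a ∈ A and c ∈ C, one has a + c ∈ u if and only if a ∈ u and c ∈ u. (This is the module-theoretic content of the paper's Proposition 2.13: an element f of W₋₁End(M) lies in u(M) iff its superdiagonal part and its corner part both lie in u(M).) -/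
/-- Any linear map from a submodule of `C` to `A` is zero, given that every
linear map `C → A` is zero and the ambient module is semisimple. -/
theorem aux_zero_hom (R : Type*) [Ring R] (B : Type*) [AddCommGroup B] [Module R B]
    [IsSemisimpleModule R B] (A C : Submodule R B)
    (hhom : ∀ φ : C →ₗ[R] A, φ = 0)
    (D : Submodule R B) (hD : D ≤ C) (φ : D →ₗ[R] A) (x : D) : φ x = 0 := by
  obtain ⟨E, hE⟩ := exists_isCompl D
  let π := D.linearProjOfIsCompl E hE
  let ψ : C →ₗ[R] A := φ.comp (π.comp C.subtype)
  have hψ := hhom ψ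
  have : ψ ⟨(x : B), hD x.2⟩ = 0 := by rw [hψ]; rfl
  have h2 : π (x : B) = x := Submodule.projectionOnto_apply_left hE x
  rw [← h2]; exact this

/-- Let `B` be a semisimple `R`-module with an internal direct sum decomposition
`B = A ⊕ C` (`A ⊓ C = ⊥`, `A ⊔ C = ⊤`) such that every `R`-linear map `C → A` is zero.
Then every submodule `u` of `B` decomposes as `u = (u ⊓ A) ⊔ (u ⊓ C)`; equivalently,
for `a ∈ A` and `c ∈ C`, `a + c ∈ u` iff `a ∈ u` and `c ∈ u`. -/
theorem stmt7 (R : Type*) [Ring R] (B : Type*) [AddCommGroup B] [Module R B]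
    [IsSemisimpleModule R B] (A C : Submodule R B)
    (hinf : A ⊓ C = ⊥) (hsup : A ⊔ C = ⊤)
    (hhom : ∀ φ : C →ₗ[R] A, φ = 0)
    (u : Submodule R B) :
    u = (u ⊓ A) ⊔ (u ⊓ C) ∧
      ∀ a ∈ A, ∀ c ∈ C, (a + c ∈ u ↔ a ∈ u ∧ c ∈ u) := by
  have hic : IsCompl A C := ⟨disjoint_iff.2 hinf, codisjoint_iff.2 hsup⟩
  -- projections
  set fA : B →ₗ[R] A := A.linearProjOfIsCompl C hic with hfA
  set fC : B →ₗ[R] C := C.linearProjOfIsCompl A hic.symm with hfC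
  -- find relative complement w of u ⊓ A inside u
  obtain ⟨⟨w, hwu⟩, hw⟩ := exists_isCompl (⟨u ⊓ A, Set.mem_Iic.2 inf_le_left⟩ : Set.Iic u)
  have hw1 : w ⊓ (u ⊓ A) = ⊥ := by
    have := hw.inf_eq_bot
    simpa [Subtype.ext_iff, inf_comm] using congrArg Subtype.val this
  have hw2 : w ⊔ (u ⊓ A) = u := by
    have := hw.sup_eq_top
    simpa [Subtype.ext_iff, sup_comm] using congrArg Subtype.val this
  -- the key claim: w ≤ C
  have hwC : w ≤ C := by
    -- map g : w →ₗ B given by C-projection, injective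
    set g : ↥w →ₗ[R] B := C.subtype.comp (fC.comp w.subtype) with hg
    have hginj : Function.Injective g := by
      rw [← LinearMap.ker_eq_bot]
      ext ⟨x, hx⟩
      simp only [LinearMap.mem_ker, Submodule.mem_bot, hg, LinearMap.comp_apply,
        Submodule.coe_subtype, Submodule.subtype_apply, ZeroMemClass.coe_eq_zero]
      constructor
      · intro h0
        have hxA : x ∈ A := by
          have := Submodule.projectionOnto_apply_eq_zero_iff hic.symm (x := x)
          exact this.1 (by exact_mod_cast h0)
        have : x ∈ w ⊓ (u ⊓ A) := ⟨hx, hwu hx, hxA⟩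
        rw [hw1] at this
        exact Subtype.ext this
      · intro h0
        have hx0 : x = 0 := congrArg Subtype.val h0
        rw [hx0]; simp
    have hrange : LinearMap.range g ≤ C := by
      rintro _ ⟨x, rfl⟩
      exact (fC (w.subtype x)).2
    set e := LinearEquiv.ofInjective g hginj with he
    set φ : ↥(LinearMap.range g) →ₗ[R] A :=
      (fA.comp w.subtype).comp e.symm.toLinearMap with hφ
    intro x hx
    have hz : φ (e ⟨x, hx⟩) = 0 :=
      aux_zero_hom R B A C hhom (LinearMap.range g) hrange φ _
    have : fA x = 0 := by
      simpa [hφ, LinearEquiv.symm_apply_apply] using hz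
    have hsum : ((A.linearProjOfIsCompl C hic x : B) + (C.linearProjOfIsCompl A hic.symm x : B) = x) :=
      Submodule.projection_add_projection_eq_self hic x
    rw [← hfA, ← hfC, this] at hsum
    rw [← hsum]
    simpa using (fC x).2
  have hwu' : w ≤ u := hwu
  have hdecomp : u = (u ⊓ A) ⊔ (u ⊓ C) := by
    apply le_antisymm
    · intro x hx
      rw [← hw2] at hx
      obtain ⟨y, hy, z, hz, rfl⟩ := Submodule.mem_sup.1 hx
      refine Submodule.mem_sup.2 ⟨z, hz, y, ?_, (add_comm z y)⟩
      exact Submodule.mem_inf.2 ⟨hwu' hy, hwC hy⟩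
    · exact sup_le inf_le_left inf_le_left
  refine ⟨hdecomp, fun a ha c hc => ?_⟩
  constructor
  · intro h
    rw [hdecomp] at h
    obtain ⟨a', ⟨ha'u, ha'A⟩, c', ⟨hc'u, hc'C⟩, heq⟩ := Submodule.mem_sup.1 h
    have hd : a - a' = c' - c := by
      rw [sub_eq_sub_iff_add_eq_add, ← heq, add_comm]
    have hmem : a - a' ∈ A ⊓ C := ⟨A.sub_mem ha ha'A, hd ▸ C.sub_mem hc'C hc⟩
    rw [hinf, Submodule.mem_bot, sub_eq_zero] at hmem
    have hc2 : c = c' := by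
      have := hd; rw [hmem, sub_self] at this
      exact (sub_eq_zero.1 this.symm).symm
    exact ⟨hmem ▸ ha'u, hc2 ▸ hc'u⟩
  · rintro ⟨h1, h2⟩; exact u.add_mem h1 h2
end

section
/- Let k be a commutative ring, G a group, X a k-linear representation of G with action ρ, U a normal subgroup of G acting trivially on X, and R a subgroup of G with U ∩ R = {1} and UR = G. Let φ : U → X satisfy φ(uv) = φ(u) + φ(v) and φ(rur⁻¹) = ρ(r)(φ(u)) for all u, v ∈ U and r ∈ R. Then the function f : G → X defined by f(ur) = φ(u) for u ∈ U and r ∈ R is a well-defined 1-cocycle of G with values in X whose restriction to U is φ and whose restriction to R is zero. -/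
/-- Let `X` be a `k`-linear representation of a group `G` via `ρ`, `U` a normal
subgroup acting trivially on `X`, and `R` a subgroup with `U ∩ R = {1}` and `UR = G`.
If `φ : U → X` is additive and `R`-equivariant, then the function `f : G → X` defined
by `f (u * r) = φ u` (for `u ∈ U`, `r ∈ R`) is a well-defined 1-cocycle whose
restriction to `U` is `φ` and whose restriction to `R` is zero. -/
theorem stmt10 (k : Type*) [CommRing k] (G : Type*) [Group G]
    (X : Type*) [AddCommGroup X] [Module k X]
    (ρ : Representation k G X)
    (U : Subgroup G) (hUnormal : U.Normal)
    (htriv : ∀ u ∈ U, ρ u = 1)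
    (R : Subgroup G)
    (hUR1 : ∀ g : G, g ∈ U → g ∈ R → g = 1)
    (hURG : ∀ g : G, ∃ u ∈ U, ∃ r ∈ R, g = u * r)
    (φ : U → X)
    (hadd : ∀ u v : U, φ (u * v) = φ u + φ v)
    (hequiv : ∀ (r : R) (u : U),
      φ ⟨(r : G) * (u : G) * (r : G)⁻¹, hUnormal.conj_mem (u : G) u.2 (r : G)⟩
        = ρ (r : G) (φ u)) :
    ∃ f : G → X,
      (∀ (u : U) (r : R), f ((u : G) * (r : G)) = φ u) ∧
      (∀ g h : G, f (g * h) = f g + ρ g (f h)) ∧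
      (∀ u : U, f (u : G) = φ u) ∧
      (∀ r : R, f (r : G) = 0) := by
  classical
  choose uu hu rr hr hdec using hURG
  -- uniqueness of the U-component
  have huniq : ∀ u1 ∈ U, ∀ r1 ∈ R, ∀ u2 ∈ U, ∀ r2 ∈ R,
      u1 * r1 = u2 * r2 → u1 = u2 := by
    intro u1 hu1 r1 hr1 u2 hu2 r2 hr2 h
    have h2 : u2⁻¹ * u1 = r2 * r1⁻¹ := by
      have := congrArg (fun x => u2⁻¹ * x * r1⁻¹) h
      simpa [mul_assoc] using this
    have hmem1 : u2⁻¹ * u1 ∈ U := mul_mem (inv_mem hu2) hu1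
    have hmem2 : u2⁻¹ * u1 ∈ R := h2 ▸ mul_mem hr2 (inv_mem hr1)
    have h1 : u2⁻¹ * u1 = 1 := hUR1 _ hmem1 hmem2
    have := congrArg (fun x => u2 * x) h1
    simpa [mul_assoc] using this
  set f : G → X := fun g => φ ⟨uu g, hu g⟩ with hf
  have hφ1 : φ 1 = 0 := by
    have h := hadd 1 1
    rw [mul_one] at h
    exact (left_eq_add.mp h)
  have hkey : ∀ (u : U) (r : R), f ((u : G) * (r : G)) = φ u := by
    intro u r
    have h1 := hdec ((u : G) * (r : G))
    have h2 : uu ((u:G)*(r:G)) = (u : G) :=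
      huniq _ (hu _) _ (hr _) _ u.2 _ r.2 h1.symm
    simp only [hf]
    congr 1
    exact Subtype.ext h2
  refine ⟨f, hkey, ?_, ?_, ?_⟩
  · intro g h
    have hg := hdec g
    have hh := hdec h
    set u1 : U := ⟨uu g, hu g⟩
    set r1 : R := ⟨rr g, hr g⟩
    set u2 : U := ⟨uu h, hu h⟩
    set r2 : R := ⟨rr h, hr h⟩
    set c : U := ⟨(rr g) * (uu h) * (rr g)⁻¹, hUnormal.conj_mem _ (hu h) _⟩
    have hgh : g * h = ((u1 * c : U) : G) * ((r1 * r2 : R) : G) := by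
      rw [hg, hh]
      show uu g * rr g * (uu h * rr h)
        = uu g * (rr g * uu h * (rr g)⁻¹) * (rr g * rr h)
      group
    have e1 : f (g * h) = φ u1 + ρ (rr g) (φ u2) := by
      rw [hgh, hkey, hadd]
      congr 1
      exact hequiv r1 u2
    have e2 : f g = φ u1 := by
      conv_lhs => rw [hg]
      exact hkey u1 r1
    have e3 : f h = φ u2 := by
      conv_lhs => rw [hh]
      exact hkey u2 r2
    have e4 : ρ g (φ u2) = ρ (rr g) (φ u2) := by
      conv_lhs => rw [hg]
      rw [map_mul, Module.End.mul_apply, htriv _ (hu g), Module.End.one_apply]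
    rw [e1, e2, e3, e4]
  · intro u
    have := hkey u ⟨1, one_mem R⟩
    simpa using this
  · intro r
    have h := hkey ⟨1, one_mem U⟩ r
    have h1 : (⟨1, one_mem U⟩ : U) = 1 := rfl
    rw [h1, hφ1] at h
    simpa using h
end
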